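/- PRESS identity: for ridge regression (or OLS) with hat matrix H having H_{μμ} ≠ 1 for all μ, the leave-one-out cross validation squared error equals (1/(2M)) Σ_μ ((y_μ − ŷ_μ)/(1 − H_{μμ}))², where ŷ = Hy and ŷ_μ({D}_{\setminus μ}) is the prediction at row μ from the estimator fitted without row μ. -/

import Mathlib

/-!
Deleting row `μ` (with feature vector `f = F μ`) turns the ridge matrix `A = s FᵀF + λ I`
(here `s = 1/N`) into the rank-one downdate `A - s f fᵀ`. By the Sherman–Morrison formula,
`fᵀ (A - s f fᵀ)⁻¹ = (1 - H μ μ)⁻¹ fᵀ A⁻¹`, so the leave-one-out prediction at `μ` is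
`((H y) μ - H μ μ * y μ) / (1 - H μ μ)`, and the leave-one-out residual is
`(y μ - (H y) μ) / (1 - H μ μ)`, term by term in the sum.
-/

open Matrix

namespace Matrix

variable {K n : Type*} [Field K] [Fintype n] [DecidableEq n]

theorem inv_add_vecMulVec {A : Matrix n n K} (hA : IsUnit A) {u v : n → K}
    (huv : 1 + v ⬝ᵥ A⁻¹ *ᵥ u ≠ 0) :
    (A + vecMulVec u v)⁻¹ =
      A⁻¹ - (1 + v ⬝ᵥ A⁻¹ *ᵥ u)⁻¹ • vecMulVec (A⁻¹ *ᵥ u) (v ᵥ* A⁻¹) := by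
  have hAA : A * A⁻¹ = 1 := mul_nonsing_inv A ((isUnit_iff_isUnit_det A).mp hA)
  apply inv_eq_right_inv
  rw [Matrix.add_mul, Matrix.mul_sub, Matrix.mul_sub, hAA, Matrix.mul_smul, Matrix.mul_smul,
    mul_vecMulVec, mulVec_mulVec, hAA, one_mulVec, vecMulVec_mul, vecMulVec_mul_vecMulVec,
    vecMulVec_smul, smul_smul]
  have hc : (1 + v ⬝ᵥ A⁻¹ *ᵥ u)⁻¹ * (1 + v ⬝ᵥ A⁻¹ *ᵥ u) = 1 := inv_mul_cancel₀ huv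
  linear_combination (norm := module) -(hc • vecMulVec u (v ᵥ* A⁻¹))

theorem dotProduct_inv_add_vecMulVec_mulVec {A : Matrix n n K} (hA : IsUnit A) {u v : n → K}
    (huv : 1 + v ⬝ᵥ A⁻¹ *ᵥ u ≠ 0) (w : n → K) :
    v ⬝ᵥ (A + vecMulVec u v)⁻¹ *ᵥ w = (1 + v ⬝ᵥ A⁻¹ *ᵥ u)⁻¹ * (v ⬝ᵥ A⁻¹ *ᵥ w) := by
  rw [inv_add_vecMulVec hA huv, sub_mulVec, smul_mulVec, vecMulVec_mulVec, dotProduct_sub,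
    dotProduct_smul, dotProduct_smul, ← dotProduct_mulVec]
  simp only [MulOpposite.smul_eq_mul_unop, MulOpposite.unop_op, smul_eq_mul]
  field_simp
  ring

section EraseRow

variable {α m n : Type*}

def eraseRow (F : Matrix m n α) (μ : m) : Matrix {ν // ν ≠ μ} n α :=
  F.submatrix Subtype.val id

variable {R : Type*} [CommRing R] [Fintype m] [DecidableEq m]

theorem eraseRow_transpose_mul_self (F : Matrix m n R) (μ : m) :
    (F.eraseRow μ)ᵀ * F.eraseRow μ = Fᵀ * F - vecMulVec (F μ) (F μ) := by
  ext i j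
  simp only [eraseRow, mul_apply, transpose_apply, submatrix_apply, id, Matrix.sub_apply,
    vecMulVec_apply, Fintype.sum_eq_add_sum_subtype_ne _ μ, add_sub_cancel_left]

theorem eraseRow_transpose_mulVec (F : Matrix m n R) (y : m → R) (μ : m) :
    (F.eraseRow μ)ᵀ *ᵥ (fun ν => y ν) = Fᵀ *ᵥ y - y μ • F μ := by
  ext i
  simp only [eraseRow, mulVec, dotProduct, transpose_apply, submatrix_apply, id, Pi.sub_apply,
    Pi.smul_apply, smul_eq_mul, Fintype.sum_eq_add_sum_subtype_ne _ μ, mul_comm (y μ),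
    add_sub_cancel_left]

end EraseRow

section MulTranspose

variable {R m n : Type*} [Semiring R] [Fintype n]

theorem mul_mul_transpose_apply (F : Matrix m n R) (B : Matrix n n R) (i j : m) :
    (F * B * Fᵀ) i j = F i ⬝ᵥ B *ᵥ F j := by
  rw [Matrix.mul_assoc]
  rfl

theorem mul_mul_transpose_mulVec_apply [Fintype m] (F : Matrix m n R) (B : Matrix n n R)
    (w : m → R) (i : m) :
    ((F * B * Fᵀ) *ᵥ w) i = F i ⬝ᵥ B *ᵥ (Fᵀ *ᵥ w) := by
  rw [← mulVec_mulVec, ← mulVec_mulVec]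
  rfl

end MulTranspose

end Matrix

section Ridge

variable {K m n : Type*} [Field K] [Fintype m] [DecidableEq m] [Fintype n] [DecidableEq n]

theorem ridge_eraseRow_residual (F : Matrix m n K) (y : m → K) (s lam : K)
    {A : Matrix n n K} (hA : A = s • (Fᵀ * F) + lam • 1) (hAunit : IsUnit A)
    {H : Matrix m m K} (hH : H = s • (F * A⁻¹ * Fᵀ)) (μ : m) (hHμ : H μ μ ≠ 1) :
    y μ - s * (F μ ⬝ᵥ (s • ((F.eraseRow μ)ᵀ * F.eraseRow μ) + lam • 1)⁻¹ *ᵥ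
        ((F.eraseRow μ)ᵀ *ᵥ fun ν => y ν))
      = (y μ - (H *ᵥ y) μ) / (1 - H μ μ) := by
  have hdowndate :
      s • ((F.eraseRow μ)ᵀ * F.eraseRow μ) + lam • 1 = A + vecMulVec (-(s • F μ)) (F μ) := by
    rw [eraseRow_transpose_mul_self, hA, neg_vecMulVec, smul_vecMulVec, smul_sub]
    abel
  have hHμμ : H μ μ = s * (F μ ⬝ᵥ A⁻¹ *ᵥ F μ) := by
    rw [hH, Matrix.smul_apply, mul_mul_transpose_apply, smul_eq_mul]
  have hHy : (H *ᵥ y) μ = s * (F μ ⬝ᵥ A⁻¹ *ᵥ (Fᵀ *ᵥ y)) := by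
    rw [hH, smul_mulVec, Pi.smul_apply, mul_mul_transpose_mulVec_apply, smul_eq_mul]
  have hden : 1 + F μ ⬝ᵥ A⁻¹ *ᵥ (-(s • F μ)) = 1 - H μ μ := by
    rw [hHμμ, mulVec_neg, mulVec_smul, dotProduct_neg, dotProduct_smul, smul_eq_mul]
    ring
  have hden0 : 1 - H μ μ ≠ 0 := sub_ne_zero.mpr hHμ.symm
  rw [hdowndate, eraseRow_transpose_mulVec,
    dotProduct_inv_add_vecMulVec_mulVec hAunit (hden ▸ hden0), hden,
    mulVec_sub, mulVec_smul, dotProduct_sub, dotProduct_smul, smul_eq_mul, hHy]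
  field_simp
  rw [hHμμ]
  ring

end Ridge

theorem stmt4_general (M N : ℕ)
    (F : Matrix (Fin M) (Fin N) ℝ) (y : Fin M → ℝ) (lam : ℝ)
    -- the ridge matrix A = FᵀF/N + λI and smoother H = (1/N) F A⁻¹ Fᵀ
    (A : Matrix (Fin N) (Fin N) ℝ)
    (hA : A = (N : ℝ)⁻¹ • (Fᵀ * F) + lam • (1 : Matrix (Fin N) (Fin N) ℝ))
    (hAunit : IsUnit A)
    (H : Matrix (Fin M) (Fin M) ℝ)
    (hH : H = (N : ℝ)⁻¹ • (F * A⁻¹ * Fᵀ))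
    (hHd : ∀ μ, H μ μ ≠ 1)
    -- leave-one-out design matrices, ridge matrices and estimators
    (Fs : (μ : Fin M) → Matrix {ν : Fin M // ν ≠ μ} (Fin N) ℝ)
    (hFs : ∀ μ, Fs μ = Matrix.submatrix F Subtype.val id)
    (As : (μ : Fin M) → Matrix (Fin N) (Fin N) ℝ)
    (hAs : ∀ μ, As μ = (N : ℝ)⁻¹ • ((Fs μ)ᵀ * Fs μ) + lam • (1 : Matrix (Fin N) (Fin N) ℝ))
    (xs : (μ : Fin M) → Fin N → ℝ)
    (hxs : ∀ μ, xs μ = (Real.sqrt N)⁻¹ •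
      (((As μ)⁻¹ * (Fs μ)ᵀ) *ᵥ (fun ν : {ν : Fin M // ν ≠ μ} => y ν.val))) :
    -- LOOCV error equals the PRESS formula
    (2 * M : ℝ)⁻¹ * ∑ μ : Fin M, (y μ - (Real.sqrt N)⁻¹ * (F μ ⬝ᵥ xs μ)) ^ 2
      = (2 * M : ℝ)⁻¹ * ∑ μ : Fin M, ((y μ - (H *ᵥ y) μ) / (1 - H μ μ)) ^ 2 := by
  have hsqrt : (Real.sqrt N)⁻¹ * (Real.sqrt N)⁻¹ = (N : ℝ)⁻¹ := by
    rw [← mul_inv, Real.mul_self_sqrt (Nat.cast_nonneg N)]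
  congr 1
  refine Finset.sum_congr rfl fun μ _ => ?_
  rw [← ridge_eraseRow_residual F y (N : ℝ)⁻¹ lam hA hAunit hH μ (hHd μ), hxs μ, hAs μ,
    show Fs μ = F.eraseRow μ from hFs μ, dotProduct_smul, smul_eq_mul, ← mul_assoc, hsqrt,
    ← mulVec_mulVec]

/-- PRESS identity for ridge regression: the leave-one-out cross-validation squared error
equals `(1/(2M)) Σ_μ ((y_μ − ŷ_μ)/(1 − H_{μμ}))²`. -/
theorem stmt4 (M N : ℕ) (hM : 0 < M) (hN : 0 < N)
    (F : Matrix (Fin M) (Fin N) ℝ) (y : Fin M → ℝ) (lam : ℝ) (hlam : 0 ≤ lam)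
    -- the ridge matrix A = FᵀF/N + λI and smoother H = (1/N) F A⁻¹ Fᵀ
    (A : Matrix (Fin N) (Fin N) ℝ)
    (hA : A = (N : ℝ)⁻¹ • (Fᵀ * F) + lam • (1 : Matrix (Fin N) (Fin N) ℝ))
    (hAunit : IsUnit A)
    (H : Matrix (Fin M) (Fin M) ℝ)
    (hH : H = (N : ℝ)⁻¹ • (F * A⁻¹ * Fᵀ))
    (hHd : ∀ μ, H μ μ ≠ 1)
    -- leave-one-out design matrices, ridge matrices and estimators
    (Fs : (μ : Fin M) → Matrix {ν : Fin M // ν ≠ μ} (Fin N) ℝ)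
    (hFs : ∀ μ, Fs μ = Matrix.submatrix F Subtype.val id)
    (As : (μ : Fin M) → Matrix (Fin N) (Fin N) ℝ)
    (hAs : ∀ μ, As μ = (N : ℝ)⁻¹ • ((Fs μ)ᵀ * Fs μ) + lam • (1 : Matrix (Fin N) (Fin N) ℝ))
    (hAsunit : ∀ μ, IsUnit (As μ))
    (xs : (μ : Fin M) → Fin N → ℝ)
    (hxs : ∀ μ, xs μ = (Real.sqrt N)⁻¹ •
      (((As μ)⁻¹ * (Fs μ)ᵀ) *ᵥ (fun ν : {ν : Fin M // ν ≠ μ} => y ν.val))) :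
    -- LOOCV error equals the PRESS formula
    (2 * M : ℝ)⁻¹ * ∑ μ : Fin M, (y μ - (Real.sqrt N)⁻¹ * (F μ ⬝ᵥ xs μ)) ^ 2
      = (2 * M : ℝ)⁻¹ * ∑ μ : Fin M, ((y μ - (H *ᵥ y) μ) / (1 - H μ μ)) ^ 2 :=
  stmt4_general M N F y lam A hA hAunit H hH hHd Fs hFs As hAs xs hxs
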